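/- arXiv:1710.03497 — 4 statements merged into one kernel-verified Lean document; each statement's English description precedes it below -/
import Mathlib

section
/- Let X̃ and Ỹ be locally compact Hausdorff topological spaces with Ỹ paracompact. Let X ⊆ X̃ and Y ⊆ Ỹ be closed subsets with Y σ-compact, and let φ̃ : X̃ → Ỹ be a continuous map such that φ̃⁻¹(Y) = X and such that the restriction φ̃|_X : X → Y is surjective and proper (the preimage in X of every compact subset of Y is compact). Then there exist an open set Θ ⊆ Ỹ containing Y and a set Ω ⊆ X̃ with X contained in the topological interior of Ω, such that φ̃(Ω) ⊆ Θ and the restriction φ̃|_Ω : Ω → Θ is proper, i.e., for every compact set L ⊆ Θ the set Ω ∩ φ̃⁻¹(L) is compact. -/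
/-- Topological core of Lemma 2.6 of the paper. Let `X̃`, `Ỹ` be locally compact Hausdorff
spaces with `Ỹ` paracompact, `X ⊆ X̃` and `Y ⊆ Ỹ` closed subsets with `Y` σ-compact, and
`φ̃ : X̃ → Ỹ` continuous with `φ̃⁻¹(Y) = X` whose restriction `φ̃|_X : X → Y` is surjective
and proper. Then there are an open set `Θ ⊇ Y` and a set `Ω` whose interior contains `X`
such that `φ̃(Ω) ⊆ Θ` and `φ̃|_Ω : Ω → Θ` is proper (preimages in `Ω` of compact subsets of
`Θ` are compact). -/
theorem exists_proper_restriction_neighborhoods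
    {X' Y' : Type*} [TopologicalSpace X'] [TopologicalSpace Y']
    [LocallyCompactSpace X'] [T2Space X'] [LocallyCompactSpace Y'] [T2Space Y']
    [ParacompactSpace Y']
    (X : Set X') (Y : Set Y') (hX : IsClosed X) (hY : IsClosed Y)
    (hYsigma : ∃ K : ℕ → Set Y', (∀ n, IsCompact (K n)) ∧ Y = ⋃ n, K n)
    (φ : X' → Y') (hφ : Continuous φ) (hpre : φ ⁻¹' Y = X)
    (hsurj : Y ⊆ φ '' X)
    (hproper : ∀ L : Set Y', IsCompact L → L ⊆ Y → IsCompact (X ∩ φ ⁻¹' L)) :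
    ∃ (Θ : Set Y') (Ω : Set X'), IsOpen Θ ∧ Y ⊆ Θ ∧ X ⊆ interior Ω ∧
      φ '' Ω ⊆ Θ ∧ ∀ L : Set Y', IsCompact L → L ⊆ Θ → IsCompact (Ω ∩ φ ⁻¹' L) := by
  classical
  obtain ⟨K, hKc, hKY⟩ := hYsigma
  -- choice of relatively compact open neighborhoods
  have hrelY : ∀ S : Set Y', IsCompact S → ∃ U, IsOpen U ∧ S ⊆ U ∧ IsCompact (closure U) :=
    fun S hS => exists_isOpen_superset_and_isCompact_closure hS
  choose! F hFopen hFsub hFclos using hrelY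
  have hrelX : ∀ S : Set X', IsCompact S → ∃ U, IsOpen U ∧ S ⊆ U ∧ IsCompact (closure U) :=
    fun S hS => exists_isOpen_superset_and_isCompact_closure hS
  choose! G hGopen hGsub hGclos using hrelX
  -- exhaustion U of a neighborhood of Y
  set U : ℕ → Set Y' := fun n => Nat.rec (F (K 0)) (fun n Un => F (closure Un ∪ K (n + 1))) n
    with hU
  have hU0 : U 0 = F (K 0) := rfl
  have hUs : ∀ n, U (n + 1) = F (closure (U n) ∪ K (n + 1)) := fun n => rfl
  have hUclos : ∀ n, IsCompact (closure (U n)) := by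
    intro n
    induction n with
    | zero => rw [hU0]; exact hFclos _ (hKc 0)
    | succ n ih => rw [hUs]; exact hFclos _ (ih.union (hKc (n + 1)))
  have hUopen : ∀ n, IsOpen (U n) := by
    intro n
    cases n with
    | zero => rw [hU0]; exact hFopen _ (hKc 0)
    | succ n => rw [hUs]; exact hFopen _ ((hUclos n).union (hKc (n + 1)))
  have hKU : ∀ n, K n ⊆ U n := by
    intro n
    cases n with
    | zero => rw [hU0]; exact hFsub _ (hKc 0)
    | succ n =>
      rw [hUs]
      exact Set.subset_union_right.trans (hFsub _ ((hUclos n).union (hKc (n + 1))))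
  have hUstep : ∀ n, closure (U n) ⊆ U (n + 1) := by
    intro n
    rw [hUs]
    exact Set.subset_union_left.trans (hFsub _ ((hUclos n).union (hKc (n + 1))))
  have hUmono : Monotone U := monotone_nat_of_le_succ fun n =>
    subset_closure.trans (hUstep n)
  set Θ : Set Y' := ⋃ n, U n with hΘ
  have hYΘ : Y ⊆ Θ := by
    rw [hKY]
    exact Set.iUnion_mono fun n => hKU n
  -- the compact sets in X
  have hXmem : ∀ x : X', x ∈ X ↔ φ x ∈ Y := by
    intro x
    rw [← hpre]; rfl
  have hE : ∀ n, IsCompact (X ∩ φ ⁻¹' closure (U n)) := by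
    intro n
    have h1 : IsCompact (closure (U n) ∩ Y) := (hUclos n).inter_right hY
    have h2 := hproper _ h1 Set.inter_subset_right
    have : X ∩ φ ⁻¹' closure (U n) = X ∩ φ ⁻¹' (closure (U n) ∩ Y) := by
      ext x
      simp only [Set.mem_inter_iff, Set.mem_preimage]
      constructor
      · rintro ⟨hx, h⟩; exact ⟨hx, h, (hXmem x).1 hx⟩
      · rintro ⟨hx, h, _⟩; exact ⟨hx, h⟩
    rw [this]; exact h2
  set V : ℕ → Set X' := fun n => G (X ∩ φ ⁻¹' closure (U n)) with hV
  have hVopen : ∀ n, IsOpen (V n) := fun n => hGopen _ (hE n)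
  have hVsub : ∀ n, X ∩ φ ⁻¹' closure (U n) ⊆ V n := fun n => hGsub _ (hE n)
  have hVclos : ∀ n, IsCompact (closure (V n)) := fun n => hGclos _ (hE n)
  -- the "previous" sets
  set P : ℕ → Set Y' := fun n => if 2 ≤ n then U (n - 2) else ∅ with hP
  have hPdef : ∀ n, P n = if 2 ≤ n then U (n - 2) else ∅ := fun n => rfl
  have hPopen : ∀ n, IsOpen (P n) := by
    intro n
    rw [hPdef]
    split
    · exact hUopen _
    · exact isOpen_empty
  set Ω : Set X' := ⋃ n, closure (V n) ∩ φ ⁻¹' (closure (U n) \ P n) with hΩ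
  refine ⟨Θ, Ω, isOpen_iUnion hUopen, hYΘ, ?_, ?_, ?_⟩
  · -- X ⊆ interior Ω
    have hopen : IsOpen (⋃ n, V n ∩ φ ⁻¹' (U n \ closure (P n))) :=
      isOpen_iUnion fun n => (hVopen n).inter
        (((hUopen n).sdiff isClosed_closure).preimage hφ)
    have hsub : (⋃ n, V n ∩ φ ⁻¹' (U n \ closure (P n))) ⊆ Ω := by
      refine Set.iUnion_mono fun n => Set.inter_subset_inter subset_closure ?_
      refine Set.preimage_mono ?_
      exact Set.diff_subset_diff subset_closure subset_closure
    have hXsub : X ⊆ ⋃ n, V n ∩ φ ⁻¹' (U n \ closure (P n)) := by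
      intro x hx
      have hφx : φ x ∈ Y := (hXmem x).1 hx
      have hex : ∃ n, φ x ∈ U n := by
        have := hYΘ hφx
        rw [hΘ] at this
        exact Set.mem_iUnion.1 this
      set n := Nat.find hex with hn
      have hmem : φ x ∈ U n := Nat.find_spec hex
      have hnot : φ x ∉ closure (P n) := by
        intro hc
        by_cases h2 : 2 ≤ n
        · rw [hPdef, if_pos h2] at hc
          have h3 : n - 2 + 1 = n - 1 := by omega
          have := hUstep (n - 2) hc
          rw [h3] at this
          exact Nat.find_min hex (by omega : n - 1 < n) this
        · rw [hPdef, if_neg h2] at hc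
          simp at hc
      refine Set.mem_iUnion.2 ⟨n, ?_, hmem, hnot⟩
      exact hVsub n ⟨hx, subset_closure hmem⟩
    exact hXsub.trans (interior_maximal hsub hopen |>.trans (interior_mono (le_refl _)))
  · -- φ '' Ω ⊆ Θ
    rintro y ⟨x, hx, rfl⟩
    rw [hΩ] at hx
    obtain ⟨n, _, h2⟩ := Set.mem_iUnion.1 hx
    exact Set.mem_iUnion.2 ⟨n + 1, hUstep n h2.1⟩
  · -- properness
    intro L hL hLΘ
    obtain ⟨t, ht⟩ := hL.elim_finite_subcover U hUopen (hLΘ.trans (le_refl _))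
    set m := t.sup id with hm
    have hLm : L ⊆ U m := by
      intro y hy
      obtain ⟨n, hn, hyn⟩ := Set.mem_iUnion₂.1 (ht hy)
      exact hUmono (Finset.le_sup (f := id) hn) hyn
    have heq : Ω ∩ φ ⁻¹' L =
        ⋃ n ∈ Finset.range (m + 2), closure (V n) ∩ φ ⁻¹' (closure (U n) \ P n) ∩ φ ⁻¹' L := by
      ext x
      simp only [Set.mem_inter_iff, hΩ, Set.mem_iUnion, Set.mem_preimage, Finset.mem_range]
      constructor
      · rintro ⟨⟨n, hVn, hU1, hP1⟩, hLx⟩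
        refine ⟨n, ?_, ⟨hVn, hU1, hP1⟩, hLx⟩
        by_contra hcon
        push_neg at hcon
        apply hP1
        rw [hPdef, if_pos (by omega : 2 ≤ n)]
        exact hUmono (by omega : m ≤ n - 2) (hLm hLx)
      · rintro ⟨n, _, ⟨hVn, hU1, hP1⟩, hLx⟩
        exact ⟨⟨n, hVn, hU1, hP1⟩, hLx⟩
    rw [heq]
    refine (Finset.range (m + 2)).isCompact_biUnion fun n _ => ?_
    refine ((hVclos n).inter_right ?_).inter_right (hL.isClosed.preimage hφ)
    exact (isClosed_closure.sdiff (hPopen n)).preimage hφ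
end

section
/- For every integer k ≥ 1, the formal power series x^k − z·y^k is irreducible in the ring ℂ⟦x, y, z⟧ of formal power series in three variables over ℂ. -/
/-!
Give `x, y, z` the weights `2, 1, k`, so that `x^k - z y^k` is weighted homogeneous of degree `2k`.
Over a domain the weighted order is additive, so in a factorization `f = g h` of a weighted
homogeneous `f` the lowest-weight components of `g` and `h` multiply to `f`. With positive weights
these components are polynomials, and they are units only if `g` and `h` are; hence a weighted
homogeneous polynomial that is irreducible in `R[x, y, z]` stays irreducible in `R⟦x, y, z⟧`.
In `R[x, y, z]`, `x^k - z y^k` is linear in `z` with coprime coefficients `-y^k` and `x^k`.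
-/

theorem Prime.isRelPrime_pow_of_not_dvd {M : Type*} [CommMonoidWithZero M] [IsCancelMulZero M]
    {p x : M} (hp : Prime p) (hpx : ¬p ∣ x) (n : ℕ) : IsRelPrime (p ^ n) x := by
  intro d hdp hdx
  obtain ⟨i, -, hd⟩ := (dvd_prime_pow hp n).mp hdp
  cases i with
  | zero => exact hd.isUnit_iff.mpr (by simp)
  | succ i => exact absurd ((dvd_pow_self p i.succ_ne_zero).trans (hd.symm.dvd.trans hdx)) hpx

namespace MvPolynomial

variable {σ R : Type*} [CommRing R]

theorem irreducible_X_pow_sub_X_mul_X_pow [IsDomain R] {i j l : σ} (hji : j ≠ i) (hli : l ≠ i)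
    (hlj : l ≠ j) (k : ℕ) : Irreducible (X i ^ k - X l * X j ^ k : MvPolynomial σ R) := by
  have hvars {m : σ} (hm : l ≠ m) : l ∉ (X m ^ k : MvPolynomial σ R).vars := fun h =>
    hm (by simpa [vars_X] using vars_pow _ _ h)
  have hrel : IsRelPrime (-(X j ^ k) : MvPolynomial σ R) (X i ^ k) :=
    (X_prime.isRelPrime_pow_of_not_dvd
      (fun h => hji (X_dvd_X.mp (X_prime.dvd_of_dvd_pow h))) k).neg_left
  convert irreducible_mul_X_add _ _ l (neg_ne_zero.mpr (pow_ne_zero k (X_ne_zero j)))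
    (by simpa only [vars_neg] using hvars hlj) (hvars hli) hrel using 1
  ring

theorem isWeightedHomogeneous_X_pow_sub_X_mul_X_pow {w : σ → ℕ} {i j l : σ} {k : ℕ}
    (hw : w l + k * w j = k * w i) :
    IsWeightedHomogeneous w (X i ^ k - X l * X j ^ k : MvPolynomial σ R) (k * w i) := by
  have hXi := (isWeightedHomogeneous_X R w i).pow k
  have hXlj := (isWeightedHomogeneous_X R w l).mul ((isWeightedHomogeneous_X R w j).pow k)
  rw [smul_eq_mul] at hXi hXlj
  exact hXi.sub (hw ▸ hXlj)

end MvPolynomial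

namespace MvPowerSeries

variable {σ R : Type*} {w : σ → ℕ}

theorem isUnit_of_isUnit_weightedHomogeneousComponent [CommRing R] [Nontrivial R]
    {f : MvPowerSeries σ R} {p : ℕ} (h : IsUnit (weightedHomogeneousComponent w p f)) :
    IsUnit f := by
  rw [isUnit_iff_constantCoeff, ← coeff_zero_eq_constantCoeff_apply,
    coeff_weightedHomogeneousComponent, map_zero] at h
  split_ifs at h
  · exact isUnit_iff_constantCoeff.mpr h
  · exact absurd h not_isUnit_zero

theorem weightedHomogeneousComponent_weightedOrder_mul [Semiring R] [NoZeroDivisors R]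
    {f g : MvPowerSeries σ R} (hf : f ≠ 0) (hg : g ≠ 0) :
    weightedHomogeneousComponent w ((f * g).weightedOrder w).toNat (f * g) =
      weightedHomogeneousComponent w (f.weightedOrder w).toNat f *
        weightedHomogeneousComponent w (g.weightedOrder w).toNat g := by
  rw [weightedOrder_mul, ENat.toNat_add (mt (weightedOrder_eq_top_iff w).mp hf)
    (mt (weightedOrder_eq_top_iff w).mp hg)]
  exact weightedHomogeneousComponent_mul_of_le_weightedOrder
    (ENat.natCast_toNat_le_self _) (ENat.natCast_toNat_le_self _)

theorem IsWeightedHomogeneous.weightedHomogeneousComponent_weightedOrder [Semiring R]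
    {f : MvPowerSeries σ R} {n : ℕ} (hf : f.IsWeightedHomogeneous w n) :
    weightedHomogeneousComponent w (f.weightedOrder w).toNat f = f := by
  obtain rfl | hf0 := eq_or_ne f 0
  · exact map_zero _
  obtain ⟨d, hd⟩ := ne_zero_iff_exists_coeff_ne_zero f |>.mp hf0
  have hord : f.weightedOrder w = n := weightedOrder_eq_nat w |>.mpr
    ⟨⟨d, hd, hf hd⟩, fun e he => hf.coeff_eq_zero he.ne⟩
  rw [hord, ENat.toNat_natCast]
  exact (isWeightedHomogeneous_iff_eq_weightedHomogeneousComponent.mp hf).symm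

theorem exists_coe_eq_of_isWeightedHomogeneous [Finite σ] [CommSemiring R]
    (hw : ∀ i, w i ≠ 0) {f : MvPowerSeries σ R} {n : ℕ} (hf : f.IsWeightedHomogeneous w n) :
    ∃ F : MvPolynomial σ R, (F : MvPowerSeries σ R) = f := by
  have hfin : (Function.support fun d => coeff d f).Finite :=
    (Finsupp.finite_of_nat_weight_le w hw n).subset fun d hd => (hf hd).le
  exact ⟨.ofCoeff (Finsupp.ofSupportFinite _ hfin), ext fun d => rfl⟩

end MvPowerSeries

namespace MvPolynomial.IsWeightedHomogeneous

open MvPowerSeries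

variable {σ R : Type*} {w : σ → ℕ} {n : ℕ}

theorem coe [CommSemiring R] {F : MvPolynomial σ R} (hF : F.IsWeightedHomogeneous w n) :
    (F : MvPowerSeries σ R).IsWeightedHomogeneous w n := fun hd =>
  hF (by rwa [coeff_coe] at hd)

theorem isUnit_of_isUnit_coe [CommRing R] [Nontrivial R] (hw : ∀ i, w i ≠ 0)
    {F : MvPolynomial σ R} (hF : F.IsWeightedHomogeneous w n)
    (h : IsUnit (F : MvPowerSeries σ R)) : IsUnit F := by
  rw [isUnit_iff_constantCoeff, ← coeff_zero_eq_constantCoeff_apply, coeff_coe] at h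
  obtain rfl : n = 0 := by
    by_contra hn
    exact not_isUnit_zero (hF.coeff_eq_zero 0 (by simpa using Ne.symm hn) ▸ h)
  rw [← weightedHomogeneousComponent_eq_self hF, weightedHomogeneousComponent_zero _ hw]
  exact h.map C

theorem irreducible_coe [Finite σ] [CommRing R] [IsDomain R] (hw : ∀ i, w i ≠ 0)
    {F : MvPolynomial σ R} (hF : F.IsWeightedHomogeneous w n) (hirr : Irreducible F) :
    Irreducible (F : MvPowerSeries σ R) := by
  refine ⟨fun h => hirr.not_isUnit (hF.isUnit_of_isUnit_coe hw h), fun g h hgh => ?_⟩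
  have hF0 : (F : MvPowerSeries σ R) ≠ 0 := by exact_mod_cast hirr.ne_zero
  obtain ⟨P, hP⟩ := exists_coe_eq_of_isWeightedHomogeneous hw
    (isWeightedHomogeneous_weightedHomogeneousComponent w g (g.weightedOrder w).toNat)
  obtain ⟨Q, hQ⟩ := exists_coe_eq_of_isWeightedHomogeneous hw
    (isWeightedHomogeneous_weightedHomogeneousComponent w h (h.weightedOrder w).toNat)
  have hPQ : F = P * Q := MvPolynomial.coe_injective σ R <| by
    rw [MvPolynomial.coe_mul, hP, hQ, ← weightedHomogeneousComponent_weightedOrder_mul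
      (left_ne_zero_of_mul (hgh ▸ hF0)) (right_ne_zero_of_mul (hgh ▸ hF0)), ← hgh,
      MvPowerSeries.IsWeightedHomogeneous.weightedHomogeneousComponent_weightedOrder hF.coe]
  refine (hirr.isUnit_or_isUnit hPQ).imp (fun hu => ?_) (fun hu => ?_)
  · exact isUnit_of_isUnit_weightedHomogeneousComponent
      (by rw [← hP]; exact hu.map coeToMvPowerSeries.ringHom)
  · exact isUnit_of_isUnit_weightedHomogeneousComponent
      (by rw [← hQ]; exact hu.map coeToMvPowerSeries.ringHom)

end MvPolynomial.IsWeightedHomogeneous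

/-- For every integer `k ≥ 1`, the formal power series `x^k - z * y^k` is irreducible in
`ℂ⟦x, y, z⟧`, the ring of formal power series in three variables over `ℂ` (here the
variables `x`, `y`, `z` are `X 0`, `X 1`, `X 2` in `MvPowerSeries (Fin 3) ℂ`). -/
theorem irreducible_X_pow_sub_Z_mul_Y_pow (k : ℕ) (hk : 1 ≤ k) :
    Irreducible ((MvPowerSeries.X 0 : MvPowerSeries (Fin 3) ℂ) ^ k -
      MvPowerSeries.X 2 * MvPowerSeries.X 1 ^ k) := by
  have hw : ∀ i, ![2, 1, k] i ≠ 0 := by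
    intro i
    fin_cases i <;> simp [Nat.one_le_iff_ne_zero.mp hk]
  have hF := MvPolynomial.isWeightedHomogeneous_X_pow_sub_X_mul_X_pow (R := ℂ)
    (w := ![2, 1, k]) (i := 0) (j := 1) (l := 2) (k := k) (by simp [mul_two])
  have hirr := MvPolynomial.irreducible_X_pow_sub_X_mul_X_pow (σ := Fin 3) (R := ℂ)
    (i := 0) (j := 1) (l := 2) (by decide) (by decide) (by decide) k
  convert hF.irreducible_coe hw hirr using 1
  rw [← MvPolynomial.coeToMvPowerSeries.ringHom_apply, map_sub]
  simp
end

section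
/- Let A be a commutative ring that is both an integral domain and an ℝ-algebra. Suppose that the complexification ℂ ⊗_ℝ A is an integral domain that is normal, i.e., integrally closed in its field of fractions. Then A is integrally closed in its field of fractions. -/
open scoped TensorProduct

/-- Descent of normality along complexification: if `A` is an integral domain which is an
`ℝ`-algebra and the complexification `ℂ ⊗[ℝ] A` is an integral domain that is integrally
closed in its field of fractions, then `A` is integrally closed in its field of fractions. -/
theorem isIntegrallyClosed_of_complexification (A : Type*) [CommRing A] [IsDomain A]
    [Algebra ℝ A] [IsDomain (ℂ ⊗[ℝ] A)] [IsIntegrallyClosed (ℂ ⊗[ℝ] A)] :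
    IsIntegrallyClosed A := by
  classical
  let f : A →+* ℂ ⊗[ℝ] A := (Algebra.TensorProduct.includeRight (R := ℝ) (A := ℂ)).toRingHom
  have hf : ∀ a : A, f a = (1 : ℂ) ⊗ₜ[ℝ] a := fun a => rfl
  -- retraction taking the real part
  let r : ℂ ⊗[ℝ] A →ₗ[ℝ] A :=
    TensorProduct.lift ((LinearMap.lsmul ℝ A).comp Complex.reLm)
  have hr1 : ∀ a : A, r ((1 : ℂ) ⊗ₜ[ℝ] a) = a := by
    intro a; simp [r]
  have hrmul : ∀ (y : ℂ ⊗[ℝ] A) (b : A), r (y * ((1 : ℂ) ⊗ₜ[ℝ] b)) = r y * b := by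
    intro y b
    induction y using TensorProduct.induction_on with
    | zero => simp
    | tmul c m =>
        simp [r, Algebra.TensorProduct.tmul_mul_tmul, smul_mul_assoc]
    | add x y hx hy => simp [add_mul, hx, hy]
  have hfinj : Function.Injective f := by
    intro a b h
    have := congrArg r h
    simpa [hf, hr1] using this
  let K := FractionRing A
  let L := FractionRing (ℂ ⊗[ℝ] A)
  let g : A →+* L := (algebraMap (ℂ ⊗[ℝ] A) L).comp f
  have hg : Function.Injective g :=
    (IsFractionRing.injective (ℂ ⊗[ℝ] A) L).comp hfinj
  let φ : K →+* L := IsFractionRing.lift hg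
  have hφ : ∀ a : A, φ (algebraMap A K a) = g a := fun a => IsFractionRing.lift_algebraMap hg a
  rw [isIntegrallyClosed_iff K]
  rintro x ⟨p, hmonic, hp⟩
  -- φ x is integral over ℂ ⊗ A
  have hint : IsIntegral (ℂ ⊗[ℝ] A) (φ x) := by
    refine ⟨p.map f, hmonic.map f, ?_⟩
    have : (p.map f).eval₂ (algebraMap (ℂ ⊗[ℝ] A) L) (φ x)
        = p.eval₂ g (φ x) := by
      rw [Polynomial.eval₂_map]
    rw [this]
    have hcomp : (g : A →+* L) = φ.comp (algebraMap A K) := by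
      ext a; simp [hφ]
    rw [hcomp, ← Polynomial.hom_eval₂, hp, map_zero]
  obtain ⟨y, hy⟩ := IsIntegrallyClosed.isIntegral_iff.mp hint
  obtain ⟨⟨a, b⟩, hab⟩ := IsLocalization.surj (nonZeroDivisors A) x
  -- push the relation to L
  have h1 : φ x * g b = g a := by
    have := congrArg φ hab
    simpa [map_mul, hφ] using this
  have h2 : algebraMap (ℂ ⊗[ℝ] A) L (y * f b) = algebraMap (ℂ ⊗[ℝ] A) L (f a) := by
    rw [map_mul, hy]; exact h1
  have h3 : y * f b = f a := IsFractionRing.injective (ℂ ⊗[ℝ] A) L h2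
  have h4 : r y * (b : A) = a := by
    have := congrArg r h3
    rwa [hf, hf, hrmul, hr1] at this
  refine ⟨r y, ?_⟩
  have hbne : algebraMap A K (b : A) ≠ 0 :=
    IsFractionRing.to_map_ne_zero_of_mem_nonZeroDivisors b.2
  apply mul_right_cancel₀ hbne
  rw [← map_mul, h4, hab]
end

section
/- Let f, g : ℂ → ℂ be entire functions (differentiable over ℂ on all of ℂ), with g not identically zero. Suppose that for every point x ∈ ℂ there exist entire functions f₁, g₁ : ℂ → ℂ with g₁(x) ≠ 0 and f(z)·g₁(z) = g(z)·f₁(z) for all z ∈ ℂ. Then g divides f in the ring of entire functions: there exists an entire function h : ℂ → ℂ with f(z) = g(z)·h(z) for all z ∈ ℂ. -/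
open Topology Filter


/-- Let `f, g : ℂ → ℂ` be entire functions with `g` not identically zero. Suppose that for
every `x ∈ ℂ` there are entire functions `f₁, g₁` with `g₁ x ≠ 0` and `f * g₁ = g * f₁`.
Then `g` divides `f` in the ring of entire functions: `f = g * h` for some entire `h`. -/
theorem entire_divides_of_locally_in_localizations
    (f g : ℂ → ℂ) (hf : Differentiable ℂ f) (hg : Differentiable ℂ g)
    (hg0 : ∃ z : ℂ, g z ≠ 0)
    (hloc : ∀ x : ℂ, ∃ f₁ g₁ : ℂ → ℂ, Differentiable ℂ f₁ ∧ Differentiable ℂ g₁ ∧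
      g₁ x ≠ 0 ∧ ∀ z : ℂ, f z * g₁ z = g z * f₁ z) :
    ∃ h : ℂ → ℂ, Differentiable ℂ h ∧ ∀ z : ℂ, f z = g z * h z := by
  classical
  choose F G hF hG hGne hEq using hloc
  set h : ℂ → ℂ := fun z => if g z = 0 then F z z / G z z else f z / g z with hh
  -- zeros of g are isolated
  have hiso : ∀ x : ℂ, ∀ᶠ z in 𝓝 x, z = x ∨ g z ≠ 0 := by
    intro x
    rcases ((hg.analyticAt x).eventually_eq_zero_or_eventually_ne_zero) with h0 | h1
    · exfalso
      obtain ⟨z, hz⟩ := hg0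
      have := (hg.differentiableOn.analyticOnNhd isOpen_univ).eqOn_zero_of_preconnected_of_eventuallyEq_zero
        isPreconnected_univ (Set.mem_univ x) h0 (Set.mem_univ z)
      exact hz this
    · rw [eventually_nhdsWithin_iff] at h1
      filter_upwards [h1] with z hz
      by_cases hzx : z = x
      · exact Or.inl hzx
      · exact Or.inr (hz hzx)
  have key : ∀ x : ℂ, h =ᶠ[𝓝 x] fun z => F x z / G x z := by
    intro x
    have hGx : ∀ᶠ z in 𝓝 x, G x z ≠ 0 :=
      ((hG x).continuous.continuousAt (x := x)).eventually_ne (hGne x)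
    filter_upwards [hiso x, hGx] with z hz hGz
    have hfrac : ∀ w, g w ≠ 0 → G x w ≠ 0 → f w / g w = F x w / G x w := by
      intro w hw hGw
      rw [div_eq_div_iff hw hGw, mul_comm (F x w)]
      exact hEq x w
    rcases hz with rfl | hgz
    · by_cases hgz : g z = 0
      · simp [hh, hgz]
      · simp only [hh, if_neg hgz]
        exact hfrac z hgz hGz
    · simp only [hh, if_neg hgz]
      exact hfrac z hgz hGz
  refine ⟨h, ?_, ?_⟩
  · intro x
    have : DifferentiableAt ℂ (fun z => F x z / G x z) x := (hF x x).div (hG x x) (hGne x)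
    exact this.congr_of_eventuallyEq (key x)
  · intro z
    by_cases hgz : g z = 0
    · have h0 : f z * G z z = 0 := by rw [hEq z z, hgz, zero_mul]
      have : f z = 0 := by
        rcases mul_eq_zero.mp h0 with h | h
        · exact h
        · exact absurd h (hGne z)
      rw [this, hgz, zero_mul]
    · simp only [hh, if_neg hgz]
      field_simp
end
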